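/- arXiv:1812.00493 — 3 statements merged into one kernel-verified Lean document; each statement's English description precedes it below -/
import Mathlib

section
/- With p = 1/n and n → ∞, the quantity (1-(1-p)^n)^2 / (2 p^2 (1-p)^{n-1}) is asymptotic to ((e-1)²/(2e)) n², which is approximately 0.543 n². -/
open Filter Topology Real

/-! The factor `p² = 1/n²` cancels the `n²`, and both `(1 - 1/n)^n` and `(1 - 1/n)^(n-1)` tend
to `e⁻¹`, so the quotient tends to `(1 - e⁻¹)² / (2 e⁻¹) = (e - 1)² / (2e)`. -/

theorem tendsto_one_add_div_pow_pred_exp (t : ℝ) :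
    Tendsto (fun n : ℕ => (1 + t / n) ^ (n - 1)) atTop (𝓝 (exp t)) := by
  have hbase : Tendsto (fun n : ℕ => 1 + t / (n : ℝ)) atTop (𝓝 1) := by
    simpa using tendsto_const_nhds.add (tendsto_const_div_atTop_nhds_zero_nat t)
  have hquot := (tendsto_one_add_div_pow_exp t).div hbase one_ne_zero
  rw [div_one] at hquot
  refine hquot.congr' ?_
  filter_upwards [eventually_ge_atTop 1, hbase.eventually_ne one_ne_zero] with n hn hne
  rw [Pi.div_apply, pow_sub₀ _ hne hn, pow_one, div_eq_mul_inv]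

/-- With `p = 1/n` and `n → ∞`, `(1-(1-p)^n)² / (2p²(1-p)^{n-1})` is asymptotic to
`((e-1)²/(2e)) n²`. -/
theorem resampling_ea_lo_asymptotic :
    Filter.Tendsto
      (fun n : ℕ =>
        ((1 - (1 - 1 / (n : ℝ)) ^ n) ^ 2 /
            (2 * (1 / (n : ℝ)) ^ 2 * (1 - 1 / (n : ℝ)) ^ (n - 1))) / (n : ℝ) ^ 2)
      atTop (nhds ((Real.exp 1 - 1) ^ 2 / (2 * Real.exp 1))) := by
  have hpow : Tendsto (fun n : ℕ => (1 - 1 / (n : ℝ)) ^ n) atTop (𝓝 (exp (-1))) := by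
    simpa [sub_eq_add_neg, neg_div] using tendsto_one_add_div_pow_exp (-1)
  have hpow_pred : Tendsto (fun n : ℕ => (1 - 1 / (n : ℝ)) ^ (n - 1)) atTop (𝓝 (exp (-1))) := by
    simpa [sub_eq_add_neg, neg_div] using tendsto_one_add_div_pow_pred_exp (-1)
  have hlimit : (exp 1 - 1) ^ 2 / (2 * exp 1) = (1 - exp (-1)) ^ 2 / (2 * exp (-1)) := by
    rw [exp_neg]
    field_simp
  rw [hlimit]
  refine (((tendsto_const_nhds.sub hpow).pow 2).div (tendsto_const_nhds.mul hpow_pred)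
    (by positivity)).congr' ?_
  filter_upwards [eventually_ne_atTop 0] with n hn
  have hn' : (n : ℝ) ≠ 0 := Nat.cast_ne_zero.mpr hn
  rw [Pi.div_apply]
  field_simp
end

section
/- The function g(c) = (1 - e^{-c}) / (c e^{-c} (1+c)) on (0,∞) attains its minimum at some c* with 0.77 < c* < 0.78, and the minimum value g(c*) is at most 0.851; in particular g attains its infimum, and this infimum is strictly less than 0.86 (hence strictly less than 1). -/
open Real Set

noncomputable def gaF (c : ℝ) : ℝ := (Real.exp c - 1) / (c * (1 + c))
noncomputable def gaH (c : ℝ) : ℝ := Real.exp c * (c^2 - c - 1) + 1 + 2*c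
noncomputable def gaH1 (c : ℝ) : ℝ := Real.exp c * (c^2 + c - 2) + 2
noncomputable def gaR : ℝ := (Real.sqrt 13 - 3) / 2

lemma gaH_hasDerivAt (c : ℝ) : HasDerivAt gaH (gaH1 c) c := by
  have p : HasDerivAt (fun x : ℝ => x^2 - x - 1) (2*c - 1) c := by
    simpa using ((hasDerivAt_pow 2 c).sub (hasDerivAt_id c)).sub_const 1
  have e := (Real.hasDerivAt_exp c).mul p
  have l : HasDerivAt (fun x : ℝ => 2*x) 2 c := by
    simpa using (hasDerivAt_id c).const_mul (2:ℝ)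
  have := (e.add_const 1).add l
  refine this.congr_deriv ?_
  unfold gaH1; ring

lemma gaH1_hasDerivAt (c : ℝ) : HasDerivAt gaH1 (Real.exp c * (c^2 + 3*c - 1)) c := by
  have p : HasDerivAt (fun x : ℝ => x^2 + x - 2) (2*c + 1) c := by
    simpa using ((hasDerivAt_pow 2 c).add (hasDerivAt_id c)).sub_const 2
  have e := (Real.hasDerivAt_exp c).mul p
  have := e.add_const 2
  refine this.congr_deriv ?_
  ring

lemma gaF_hasDerivAt {c : ℝ} (hc : 0 < c) :
    HasDerivAt gaF (gaH c / (c * (1 + c))^2) c := by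
  have num : HasDerivAt (fun x : ℝ => Real.exp x - 1) (Real.exp c) c :=
    (Real.hasDerivAt_exp c).sub_const 1
  have den : HasDerivAt (fun x : ℝ => x * (1 + x)) (1 * (1 + c) + c * 1) c :=
    (hasDerivAt_id c).mul ((hasDerivAt_id c).const_add 1)
  have hne : c * (1 + c) ≠ 0 := by positivity
  have := num.div den hne
  refine this.congr_deriv ?_
  rw [div_eq_div_iff (by positivity) (by positivity)]
  unfold gaH; ring

lemma exp_077_gt : (2.158 : ℝ) < Real.exp 0.77 := by
  have h := Real.sum_le_exp_of_nonneg (by norm_num : (0:ℝ) ≤ 0.77) 8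
  have : (2.158 : ℝ) < ∑ i ∈ Finset.range 8, (0.77:ℝ)^i / i.factorial := by
    simp [Finset.sum_range_succ, Nat.factorial]
    norm_num
  linarith

lemma exp_07736_lt : Real.exp 0.7736 < 2.16756 := by
  have h := Real.exp_bound' (by norm_num : (0:ℝ) ≤ 0.7736) (by norm_num : (0.7736:ℝ) ≤ 1)
    (n := 7) (by norm_num)
  have : (∑ m ∈ Finset.range 7, (0.7736:ℝ) ^ m / m.factorial) +
      (0.7736:ℝ) ^ 7 * (7 + 1) / (Nat.factorial 7 * 7) < 2.16756 := by
    simp [Finset.sum_range_succ, Nat.factorial]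
    norm_num
  linarith

lemma gaH_077_neg : gaH 0.77 < 0 := by
  have := exp_077_gt
  unfold gaH
  nlinarith

lemma gaH_a_pos : 0 < gaH 0.7736 := by
  have := exp_07736_lt
  have h2 : (2.158:ℝ) < Real.exp 0.7736 := by
    have := exp_077_gt
    have : Real.exp 0.77 ≤ Real.exp 0.7736 := Real.exp_le_exp.2 (by norm_num)
    linarith [exp_077_gt]
  unfold gaH
  nlinarith

lemma gaR_mem : 0.29 < gaR ∧ gaR < 0.31 := by
  have hs : Real.sqrt 13 ^ 2 = 13 := Real.sq_sqrt (by norm_num)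
  have hs0 : 0 ≤ Real.sqrt 13 := Real.sqrt_nonneg 13
  unfold gaR
  constructor <;> nlinarith

lemma quad_neg_of_lt {c : ℝ} (h0 : 0 ≤ c) (h1 : c < gaR) : c^2 + 3*c - 1 < 0 := by
  have hs : Real.sqrt 13 ^ 2 = 13 := Real.sq_sqrt (by norm_num)
  have hs0 : 0 ≤ Real.sqrt 13 := Real.sqrt_nonneg 13
  unfold gaR at h1
  nlinarith

lemma quad_pos_of_gt {c : ℝ} (h1 : gaR < c) : 0 < c^2 + 3*c - 1 := by
  have hs : Real.sqrt 13 ^ 2 = 13 := Real.sq_sqrt (by norm_num)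
  have hs0 : 0 ≤ Real.sqrt 13 := Real.sqrt_nonneg 13
  have h0 : 0 < c := lt_trans (by linarith [gaR_mem.1]) h1
  unfold gaR at h1
  nlinarith

lemma gaH1_cont : Continuous gaH1 := by
  unfold gaH1; continuity

lemma gaH1_strictAnti : StrictAntiOn gaH1 (Icc 0 gaR) := by
  apply strictAntiOn_of_deriv_neg (convex_Icc _ _) gaH1_cont.continuousOn
  intro x hx
  rw [interior_Icc] at hx
  rw [(gaH1_hasDerivAt x).deriv]
  exact mul_neg_of_pos_of_neg (Real.exp_pos x) (quad_neg_of_lt hx.1.le hx.2)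

lemma gaH1_mono : MonotoneOn gaH1 (Ici gaR) := by
  apply monotoneOn_of_deriv_nonneg (convex_Ici _) gaH1_cont.continuousOn
  · intro x hx
    exact (gaH1_hasDerivAt x).differentiableAt.differentiableWithinAt
  · intro x hx
    rw [interior_Ici] at hx
    rw [(gaH1_hasDerivAt x).deriv]
    exact le_of_lt (mul_pos (Real.exp_pos x) (quad_pos_of_gt hx))

lemma gaH1_zero : gaH1 0 = 0 := by unfold gaH1; simp

lemma gaH1_neg {c : ℝ} (h0 : 0 < c) (h1 : c ≤ gaR) : gaH1 c < 0 := by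
  have := gaH1_strictAnti (left_mem_Icc.2 (by linarith [gaR_mem.1])) ⟨h0.le, h1⟩ h0
  rwa [gaH1_zero] at this

lemma gaH1_pos_of_ge {c : ℝ} (hc : 0.77 ≤ c) : 0 < gaH1 c := by
  unfold gaH1
  rcases le_or_gt 2 (c^2 + c) with h | h
  · nlinarith [Real.exp_pos c]
  · have hc1 : c ≤ 1 := by nlinarith
    have he : Real.exp c ≤ Real.exp 1 := Real.exp_le_exp.2 hc1
    have he1 : Real.exp 1 < 2.7182818286 := Real.exp_one_lt_d9
    have hep : (0:ℝ) < Real.exp c := Real.exp_pos c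
    nlinarith [mul_le_mul_of_nonpos_right he (by nlinarith : c^2 + c - 2 ≤ 0)]

lemma gaH_cont : Continuous gaH := by unfold gaH; continuity

lemma gaH_zero : gaH 0 = 0 := by unfold gaH; simp

lemma gaH_strictMono : StrictMonoOn gaH (Ici 0.77) := by
  apply strictMonoOn_of_deriv_pos (convex_Ici _) gaH_cont.continuousOn
  intro x hx
  rw [interior_Ici] at hx
  rw [(gaH_hasDerivAt x).deriv]
  exact gaH1_pos_of_ge hx.le

lemma gaH_strictAnti_small : StrictAntiOn gaH (Icc 0 gaR) := by
  apply strictAntiOn_of_deriv_neg (convex_Icc _ _) gaH_cont.continuousOn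
  intro x hx
  rw [interior_Icc] at hx
  rw [(gaH_hasDerivAt x).deriv]
  exact gaH1_neg hx.1 hx.2.le

lemma gaH_neg_small {c : ℝ} (h0 : 0 < c) (h1 : c < 0.77) : gaH c < 0 := by
  have hr1 : (0.29:ℝ) < gaR := gaR_mem.1
  have hr2 : gaR < 0.31 := gaR_mem.2
  have hHr : gaH gaR < 0 := by
    have := gaH_strictAnti_small (left_mem_Icc.2 (by linarith)) (right_mem_Icc.2 (by linarith))
      (by linarith)
    rwa [gaH_zero] at this
  rcases le_or_gt c gaR with hcr | hcr
  · have := gaH_strictAnti_small (left_mem_Icc.2 (by linarith)) ⟨h0.le, hcr⟩ h0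
    rwa [gaH_zero] at this
  · rcases le_or_gt (gaH1 c) 0 with hg | hg
    · -- gaH antitone on [gaR, c]
      have hanti : AntitoneOn gaH (Icc gaR c) := by
        apply antitoneOn_of_deriv_nonpos (convex_Icc _ _) gaH_cont.continuousOn
        · intro x hx
          exact (gaH_hasDerivAt x).differentiableAt.differentiableWithinAt
        · intro x hx
          rw [interior_Icc] at hx
          rw [(gaH_hasDerivAt x).deriv]
          have := gaH1_mono (mem_Ici.2 hx.1.le) (mem_Ici.2 hcr.le) hx.2.le
          linarith
      have := hanti (left_mem_Icc.2 hcr.le) (right_mem_Icc.2 hcr.le) hcr.le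
      linarith
    · -- gaH monotone on [c, 0.77]
      have hmono : MonotoneOn gaH (Icc c 0.77) := by
        apply monotoneOn_of_deriv_nonneg (convex_Icc _ _) gaH_cont.continuousOn
        · intro x hx
          exact (gaH_hasDerivAt x).differentiableAt.differentiableWithinAt
        · intro x hx
          rw [interior_Icc] at hx
          rw [(gaH_hasDerivAt x).deriv]
          have : gaH1 c ≤ gaH1 x := gaH1_mono hcr.le (le_trans hcr.le hx.1.le) hx.1.le
          linarith
      have := hmono (left_mem_Icc.2 h1.le) (right_mem_Icc.2 h1.le) h1.le
      linarith [gaH_077_neg]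

lemma gaCstar_exists : ∃ c ∈ Ioo (0.77:ℝ) 0.7736, gaH c = 0 := by
  have hsub := intermediate_value_Ioo (by norm_num : (0.77:ℝ) ≤ 0.7736)
    gaH_cont.continuousOn
  have h0 : (0:ℝ) ∈ Ioo (gaH 0.77) (gaH 0.7736) := ⟨gaH_077_neg, gaH_a_pos⟩
  obtain ⟨c, hc, hceq⟩ := hsub h0
  exact ⟨c, hc, hceq⟩

lemma gaH_neg_lt {cs c : ℝ} (hcs1 : 0.77 < cs) (hcs0 : gaH cs = 0)
    (h0 : 0 < c) (h1 : c < cs) : gaH c < 0 := by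
  rcases lt_or_ge c 0.77 with h | h
  · exact gaH_neg_small h0 h
  · have := gaH_strictMono (mem_Ici.2 h) (mem_Ici.2 hcs1.le) h1
    linarith

lemma gaH_pos_gt {cs c : ℝ} (hcs1 : 0.77 < cs) (hcs0 : gaH cs = 0) (h1 : cs < c) :
    0 < gaH c := by
  have := gaH_strictMono (mem_Ici.2 hcs1.le) (mem_Ici.2 (by linarith)) h1
  linarith

lemma gaF_contOn {a b : ℝ} (ha : 0 < a) : ContinuousOn gaF (Icc a b) := by
  intro x hx
  exact ((gaF_hasDerivAt (lt_of_lt_of_le ha hx.1)).differentiableAt.continuousAt).continuousWithinAt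

lemma gaF_min {cs : ℝ} (hcs1 : 0.77 < cs) (hcs2 : cs < 0.7736) (hcs0 : gaH cs = 0) :
    ∀ c, 0 < c → gaF cs ≤ gaF c := by
  intro c hc
  rcases lt_trichotomy c cs with h | h | h
  · have hanti : StrictAntiOn gaF (Icc c cs) := by
      apply strictAntiOn_of_deriv_neg (convex_Icc _ _) (gaF_contOn hc)
      intro x hx
      rw [interior_Icc] at hx
      have hx0 : 0 < x := lt_trans hc hx.1
      rw [(gaF_hasDerivAt hx0).deriv]
      apply div_neg_of_neg_of_pos
      · exact gaH_neg_lt hcs1 hcs0 hx0 hx.2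
      · positivity
    exact le_of_lt (hanti (left_mem_Icc.2 h.le) (right_mem_Icc.2 h.le) h)
  · exact le_of_eq (by rw [h])
  · have hmono : StrictMonoOn gaF (Icc cs c) := by
      apply strictMonoOn_of_deriv_pos (convex_Icc _ _) (gaF_contOn (by linarith))
      intro x hx
      rw [interior_Icc] at hx
      have hx0 : 0 < x := by linarith [hx.1]
      rw [(gaF_hasDerivAt hx0).deriv]
      apply div_pos
      · exact gaH_pos_gt hcs1 hcs0 hx.1
      · positivity
    exact le_of_lt (hmono (left_mem_Icc.2 h.le) (right_mem_Icc.2 h.le) h)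

lemma gaF_val_le {cs : ℝ} (hcs1 : 0.77 < cs) (hcs2 : cs < 0.7736) (hcs0 : gaH cs = 0) :
    gaF cs ≤ 0.851 := by
  have hkey : (Real.exp cs - 1) * (1 + cs - cs^2) = cs * (1 + cs) := by
    unfold gaH at hcs0; linear_combination -hcs0
  have h851 : 1 ≤ 0.851 * (1 + cs - cs^2) := by nlinarith
  have hex : 1 ≤ Real.exp cs := Real.one_le_exp (by linarith)
  have hden : (0:ℝ) < cs * (1 + cs) := by nlinarith
  unfold gaF
  rw [div_le_iff₀ hden]
  nlinarith

lemma ga_rw {x : ℝ} (hx : 0 < x) :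
    (1 - Real.exp (-x)) / (x * Real.exp (-x) * (1 + x)) = gaF x := by
  unfold gaF
  rw [Real.exp_neg]
  have h1 : Real.exp x ≠ 0 := Real.exp_ne_zero x
  have h2 : x ≠ 0 := hx.ne'
  have h3 : (1:ℝ) + x ≠ 0 := by positivity
  field_simp

/-- The function `g(c) = (1 - e^{-c}) / (c e^{-c} (1+c))` on `(0,∞)` attains a
minimum at some `c*` with `0.77 < c* < 0.78`, and the minimum value is at most
`0.851` (in particular strictly less than `0.86` and strictly less than `1`... of
the bound `0.86`). -/
theorem greedy_ga_constant_minimum :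
    ∃ c : ℝ, 0.77 < c ∧ c < 0.78 ∧
      (∀ c' : ℝ, 0 < c' →
        (1 - Real.exp (-c)) / (c * Real.exp (-c) * (1 + c)) ≤
          (1 - Real.exp (-c')) / (c' * Real.exp (-c') * (1 + c'))) ∧
      (1 - Real.exp (-c)) / (c * Real.exp (-c) * (1 + c)) ≤ 0.851 ∧
      (1 - Real.exp (-c)) / (c * Real.exp (-c) * (1 + c)) < 0.86 := by
  obtain ⟨cs, hmem, hzero⟩ := gaCstar_exists
  have h1 : 0.77 < cs := hmem.1
  have h2 : cs < 0.7736 := hmem.2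
  have hval : gaF cs ≤ 0.851 := gaF_val_le h1 h2 hzero
  refine ⟨cs, h1, by linarith, ?_, ?_, ?_⟩
  · intro c' hc'
    rw [ga_rw (by linarith : (0:ℝ) < cs), ga_rw hc']
    exact gaF_min h1 h2 hzero c' hc'
  · rw [ga_rw (by linarith : (0:ℝ) < cs)]; exact hval
  · rw [ga_rw (by linarith : (0:ℝ) < cs)]; linarith
end

section
/- The drift expression B(n,v,ℓ) := ∑_{i=⌈ℓ/2⌉}^{ℓ} C(n-v,i)·C(v,ℓ-i)·(2i-ℓ)/C(n,ℓ) equals the expected value of max{OneMax(y) - v, 0}, where y is obtained from a string x with exactly v ones by flipping exactly ℓ uniformly random distinct positions. -/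
open Finset

/-- `OneMax` of a bit string: the number of ones. -/
def oneMax {n : ℕ} (x : Fin n → Bool) : ℕ := (Finset.univ.filter fun i => x i = true).card

/-- Flip the bits of `x` in the positions of `S`. -/
def flipSet {n : ℕ} (x : Fin n → Bool) (S : Finset (Fin n)) : Fin n → Bool :=
  fun i => if i ∈ S then !(x i) else x i

/-! Flipping `ℓ` positions of which `k` hold a zero changes OneMax by `2k - ℓ`. Grouping the
`ℓ`-subsets by `k` gives `C(n-v, k) C(v, ℓ-k)` subsets per group, and the truncation at `0`
keeps exactly the groups with `2k ≥ ℓ`, i.e. `k ≥ ⌈ℓ/2⌉ = (ℓ+1)/2`. -/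

section PowersetCard

variable {α : Type*} [DecidableEq α] (p : α → Prop) [DecidablePred p] (U : Finset α) {ℓ : ℕ}

theorem card_powersetCard_filter_card_filter_eq {i : ℕ} (hi : i ≤ ℓ) :
    #{S ∈ powersetCard ℓ U | #(S.filter p) = i} =
      (#(U.filter p)).choose i * (#(U.filter (¬p ·))).choose (ℓ - i) := by
  rw [← card_powersetCard, ← card_powersetCard, ← card_product]
  have filter_union_eq {A B : Finset α} (hA : A ⊆ U.filter p) (hB : B ⊆ U.filter (¬p ·)) :
      (A ∪ B).filter p = A ∧ (A ∪ B).filter (¬p ·) = B := by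
    constructor <;> ext a <;> grind
  refine card_nbij' (fun S => (S.filter p, S.filter (¬p ·))) (fun A => A.1 ∪ A.2) ?_ ?_ ?_ ?_
  · intro S hS
    simp only [mem_coe, mem_filter, mem_powersetCard] at hS
    obtain ⟨⟨hSU, hScard⟩, hSp⟩ := hS
    have := card_filter_add_card_filter_not (s := S) p
    simp only [mem_coe, mem_product, mem_powersetCard]
    exact ⟨⟨filter_subset_filter p hSU, hSp⟩, filter_subset_filter _ hSU, by omega⟩
  · rintro ⟨A, B⟩ hAB
    simp only [mem_coe, mem_product, mem_powersetCard] at hAB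
    obtain ⟨⟨hA, hAcard⟩, hB, hBcard⟩ := hAB
    have hdisj : Disjoint A B := (disjoint_filter_filter_not U U p).mono hA hB
    simp only [mem_coe, mem_filter, mem_powersetCard]
    refine ⟨⟨union_subset (hA.trans (filter_subset _ _)) (hB.trans (filter_subset _ _)), ?_⟩, ?_⟩
    · rw [card_union_of_disjoint hdisj]; omega
    · rw [(filter_union_eq hA hB).1, hAcard]
  · intro S _
    exact filter_union_filter_not_eq p S
  · rintro ⟨A, B⟩ hAB
    simp only [mem_coe, mem_product, mem_powersetCard] at hAB
    obtain ⟨hA, hB⟩ := filter_union_eq hAB.1.1 hAB.2.1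
    exact Prod.ext hA hB

theorem sum_powersetCard_comp_card_filter {M : Type*} [AddCommMonoid M] (f : ℕ → M) :
    ∑ S ∈ powersetCard ℓ U, f #(S.filter p) =
      ∑ i ∈ range (ℓ + 1),
        ((#(U.filter p)).choose i * (#(U.filter (¬p ·))).choose (ℓ - i)) • f i := by
  have hmaps : ∀ S ∈ powersetCard ℓ U, #(S.filter p) ∈ range (ℓ + 1) := fun S hS =>
    mem_range_succ_iff.2 ((card_filter_le S p).trans (mem_powersetCard.1 hS).2.le)
  rw [← sum_fiberwise_of_maps_to hmaps]
  refine sum_congr rfl fun i hi => ?_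
  rw [sum_congr rfl fun S hS => congrArg f (mem_filter.1 hS).2, sum_const,
    card_powersetCard_filter_card_filter_eq p U (mem_range_succ_iff.1 hi)]

end PowersetCard

theorem sum_range_mul_max_two_mul_sub_zero {R : Type*} [CommRing R] [LinearOrder R]
    [IsStrictOrderedRing R] (a : ℕ → R) (ℓ : ℕ) :
    ∑ i ∈ range (ℓ + 1), a i * max (2 * (i : R) - ℓ) 0 =
      ∑ i ∈ Icc ((ℓ + 1) / 2) ℓ, a i * (2 * (i : R) - ℓ) := by
  have hsub : Icc ((ℓ + 1) / 2) ℓ ⊆ range (ℓ + 1) := fun i hi =>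
    mem_range_succ_iff.2 (mem_Icc.1 hi).2
  rw [← sum_subset hsub fun i hi hi' => ?_]
  · refine sum_congr rfl fun i hi => ?_
    have : ℓ ≤ 2 * i := by simp only [mem_Icc] at hi; omega
    rw [max_eq_left (by rw [sub_nonneg]; exact_mod_cast this)]
  · have : 2 * i ≤ ℓ := by simp only [mem_range, mem_Icc] at hi hi'; omega
    rw [max_eq_right (by rw [sub_nonpos]; exact_mod_cast this), mul_zero]

section BitString

variable {n : ℕ} (x : Fin n → Bool)

theorem card_filter_eq_false : #{i | x i = false} = n - oneMax x := by
  have := card_filter_add_card_filter_not (s := univ) (x · = true)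
  simp only [Bool.not_eq_true, card_univ, Fintype.card_fin] at this
  rw [oneMax]; omega

theorem card_filter_not_eq_false : #{i | ¬x i = false} = oneMax x := by
  simp only [Bool.not_eq_false, oneMax]

theorem oneMax_flipSet_sub (S : Finset (Fin n)) :
    (oneMax (flipSet x S) : ℤ) - oneMax x = 2 * #(S.filter (x · = false)) - #S := by
  have hflip : univ.filter (flipSet x S · = true) =
      S.filter (x · = false) ∪ (univ.filter (x · = true) \ S) := by
    ext i; by_cases hi : i ∈ S <;> simp [flipSet, hi]
  have hdisj : Disjoint (S.filter (x · = false)) (univ.filter (x · = true) \ S) :=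
    disjoint_sdiff.mono_left (filter_subset _ _)
  have hkept : #(univ.filter (x · = true) \ S) + #(S.filter (x · = true)) = oneMax x := by
    have hinter : univ.filter (x · = true) ∩ S = S.filter (x · = true) := by ext; simp [and_comm]
    rw [oneMax, ← hinter, card_sdiff_add_card_inter]
  have hS := card_filter_add_card_filter_not (s := S) (x · = false)
  simp only [Bool.not_eq_false] at hS
  rw [oneMax, hflip, card_union_of_disjoint hdisj]
  omega

end BitString

theorem drift_maximizer_formula_general (n v ℓ : ℕ) (x : Fin n → Bool) (hx : oneMax x = v) :
    ((n.choose ℓ : ℝ))⁻¹ *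
        ∑ S ∈ Finset.powersetCard ℓ (Finset.univ : Finset (Fin n)),
          (max ((oneMax (flipSet x S) : ℤ) - v) 0 : ℤ) =
      ∑ i ∈ Finset.Icc ((ℓ + 1) / 2) ℓ,
        ((n - v).choose i : ℝ) * (v.choose (ℓ - i) : ℝ) * (2 * (i : ℝ) - ℓ) /
          (n.choose ℓ : ℝ) := by
  have hgain : ∀ S ∈ powersetCard ℓ univ, max ((oneMax (flipSet x S) : ℤ) - v) 0 =
      max (2 * (#(S.filter (x · = false)) : ℤ) - ℓ) 0 := fun S hS => by
    rw [← hx, oneMax_flipSet_sub, (mem_powersetCard.1 hS).2]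
  have hsum : ∑ S ∈ powersetCard ℓ univ, max ((oneMax (flipSet x S) : ℤ) - v) 0 =
      ∑ i ∈ Icc ((ℓ + 1) / 2) ℓ, ((n - v).choose i * v.choose (ℓ - i) : ℤ) * (2 * i - ℓ) := by
    rw [sum_congr rfl hgain, sum_powersetCard_comp_card_filter (x · = false) univ
      (fun k => max (2 * (k : ℤ) - ℓ) 0), card_filter_eq_false, card_filter_not_eq_false, hx]
    simp only [nsmul_eq_mul]
    exact_mod_cast sum_range_mul_max_two_mul_sub_zero
      (fun i => (((n - v).choose i * v.choose (ℓ - i) : ℕ) : ℤ)) ℓ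
  rw [hsum]
  push_cast
  rw [mul_sum]
  exact sum_congr rfl fun i _ => by ring

/-- The drift expression `B(n,v,ℓ) = ∑_{i=⌈ℓ/2⌉}^{ℓ} C(n-v,i)C(v,ℓ-i)(2i-ℓ)/C(n,ℓ)`
equals the expected value of `max{OneMax(y) - v, 0}` where `y` is obtained from a
string `x` with exactly `v` ones by flipping a uniformly random set of `ℓ` distinct
positions. -/
theorem drift_maximizer_formula (n v ℓ : ℕ) (hn : 1 ≤ n) (hv : v ≤ n)
    (hℓ : 1 ≤ ℓ) (hℓn : ℓ ≤ n) (x : Fin n → Bool) (hx : oneMax x = v) :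
    ((n.choose ℓ : ℝ))⁻¹ *
        ∑ S ∈ Finset.powersetCard ℓ (Finset.univ : Finset (Fin n)),
          (max ((oneMax (flipSet x S) : ℤ) - v) 0 : ℤ) =
      ∑ i ∈ Finset.Icc ((ℓ + 1) / 2) ℓ,
        ((n - v).choose i : ℝ) * (v.choose (ℓ - i) : ℝ) * (2 * (i : ℝ) - ℓ) /
          (n.choose ℓ : ℝ) :=
  drift_maximizer_formula_general n v ℓ x hx
end
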